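/- arXiv:2509.25135 — 9 statements merged into one kernel-verified Lean document; each statement's English description precedes it below -/
import Mathlib

section
/- If H is an intersection-closed hypothesis class (closed under arbitrary intersections) over a domain X, then the threshold dimension of H equals the depth of H, i.e., the length of the longest strict chain h_0 ⊋ h_1 ⊋ ... ⊋ h_L of sets in H. -/
/-- `H` has a threshold witness of length `k`: points `x_1,...,x_k` and
hypotheses `h_0,...,h_k ∈ H` with `x_j ∈ h_i ↔ j ≤ i`. -/
def HasThresh {X : Type*} (H : Set (Set X)) (k : ℕ) : Prop :=
  ∃ (x : Fin k → X) (h : Fin (k + 1) → Set X),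
    (∀ i, h i ∈ H) ∧ ∀ i j, x j ∈ h i ↔ (j : ℕ) + 1 ≤ (i : ℕ)

/-- The threshold dimension of `H`. -/
noncomputable def tdim {X : Type*} (H : Set (Set X)) : ℕ∞ :=
  sSup {n : ℕ∞ | ∃ k : ℕ, HasThresh H k ∧ n = k}

/-- `H` contains a strict chain `h_0 ⊋ h_1 ⊋ ... ⊋ h_L`. -/
def HasChain {X : Type*} (H : Set (Set X)) (L : ℕ) : Prop :=
  ∃ h : Fin (L + 1) → Set X,
    (∀ i, h i ∈ H) ∧ ∀ i j, i < j → h j ⊂ h i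

/-- The depth of `H`: the length of the longest strict chain in `H`. -/
noncomputable def depth {X : Type*} (H : Set (Set X)) : ℕ∞ :=
  sSup {n : ℕ∞ | ∃ L : ℕ, HasChain H L ∧ n = L}

/-- `H` is closed under arbitrary (nonempty) intersections. -/
def InterClosed {X : Type*} (H : Set (Set X)) : Prop :=
  ∀ S ⊆ H, S.Nonempty → ⋂₀ S ∈ H

theorem chain_to_thresh {X : Type*} (H : Set (Set X)) (L : ℕ)
    (hc : HasChain H L) : HasThresh H L := by
  obtain ⟨h, hmem, hchain⟩ := hc
  have hmono : ∀ p q : Fin (L+1), p ≤ q → h q ⊆ h p := by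
    intro p q hpq
    rcases lt_or_eq_of_le hpq with hlt | rfl
    · exact (hchain p q hlt).subset
    · exact le_refl _
  set g : Fin (L+1) → Set X := fun i => h ⟨L - i, by omega⟩ with hg
  have gwit : ∀ j : Fin L, ∃ y, y ∈ g ⟨(j:ℕ)+1, by omega⟩ ∧ y ∉ g ⟨(j:ℕ), by omega⟩ := by
    intro j
    have hss : h ⟨L - (j:ℕ), by omega⟩ ⊂ h ⟨L - ((j:ℕ)+1), by omega⟩ := by
      apply hchain
      simp only [Fin.lt_def]
      have := j.isLt
      omega
    obtain ⟨y, hy1, hy2⟩ := Set.exists_of_ssubset hss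
    exact ⟨y, hy1, hy2⟩
  choose x hx1 hx2 using gwit
  refine ⟨x, g, fun i => hmem _, ?_⟩
  intro i j
  constructor
  · intro hmem' 
    by_contra hle
    push_neg at hle
    have hsub : g i ⊆ g ⟨(j:ℕ), by omega⟩ := by
      apply hmono
      simp only [Fin.le_def]
      omega
    exact hx2 j (hsub hmem')
  · intro hle
    have hsub : g ⟨(j:ℕ)+1, by omega⟩ ⊆ g i := by
      apply hmono
      simp only [Fin.le_def]
      omega
    exact hsub (hx1 j)

theorem thresh_to_chain {X : Type*} (H : Set (Set X)) (hH : InterClosed H) (k : ℕ)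
    (ht : HasThresh H k) : HasChain H k := by
  obtain ⟨x, h, hmem, hx⟩ := ht
  set g : Fin (k+1) → Set X := fun i => ⋂₀ (h '' {l | i ≤ l}) with hg
  have gmem : ∀ i, g i ∈ H := by
    intro i
    apply hH
    · rintro s ⟨l, _, rfl⟩; exact hmem l
    · exact ⟨h i, ⟨i, le_refl i, rfl⟩⟩
  have gmem_iff : ∀ (i : Fin (k+1)) (y : X), y ∈ g i ↔ ∀ l, i ≤ l → y ∈ h l := by
    intro i y
    simp [hg, Set.mem_sInter]
  have gmono : ∀ a b : Fin (k+1), a ≤ b → g a ⊆ g b := by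
    intro a b hab y hy
    rw [gmem_iff] at hy ⊢
    intro l hl
    exact hy l (le_trans hab hl)
  have gstrict : ∀ a b : Fin (k+1), a < b → g a ⊂ g b := by
    intro a b hab
    refine ⟨gmono a b hab.le, fun hsub => ?_⟩
    have hblt := b.isLt
    have hbpos : 0 < (b:ℕ) := by
      have : (a:ℕ) < (b:ℕ) := hab
      omega
    set j : Fin k := ⟨(b:ℕ) - 1, by omega⟩ with hj
    have hxb : x j ∈ g b := by
      rw [gmem_iff]
      intro l hl
      rw [hx]
      have : (b:ℕ) ≤ (l:ℕ) := hl
      simp [hj]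
      omega
    have hxa : x j ∉ g a := by
      intro hmem'
      rw [gmem_iff] at hmem'
      have := hmem' a (le_refl a)
      rw [hx] at this
      simp [hj] at this
      have hab' : (a:ℕ) < (b:ℕ) := hab
      omega
    exact hxa (hsub hxb)
  refine ⟨fun i => g ⟨k - (i:ℕ), by omega⟩, fun i => gmem _, ?_⟩
  intro i j hij
  apply gstrict
  simp only [Fin.lt_def]
  have hi := i.isLt
  have hj := j.isLt
  have : (i:ℕ) < (j:ℕ) := hij
  omega

theorem stmt_0 {X : Type*} (H : Set (Set X)) (hH : InterClosed H) :
    tdim H = depth H := by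
  unfold tdim depth
  congr 1
  ext n
  constructor
  · rintro ⟨k, hk, rfl⟩
    exact ⟨k, thresh_to_chain H hH k hk, rfl⟩
  · rintro ⟨L, hL, rfl⟩
    exact ⟨L, chain_to_thresh H L hL, rfl⟩
end

section
/- For any finite hypothesis class H of subsets of a domain X, the threshold dimension of the intersection closure of H is at most the cardinality of H, i.e., Tdim(H̄) ≤ |H|. -/
/-- The intersection closure `H̄ = { ⋂₀ S : ∅ ≠ S ⊆ H }`. -/
def iclos {X : Type*} (H : Set (Set X)) : Set (Set X) :=
  {g | ∃ S : Set (Set X), S ⊆ H ∧ S.Nonempty ∧ g = ⋂₀ S}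

lemma key {X : Type*} (H : Set (Set X)) (hfin : H.Finite) (k : ℕ)
    (hk : HasThresh (iclos H) k) : k ≤ H.ncard := by
  obtain ⟨x, h, hmem, hthr⟩ := hk
  -- For each j, pick a set in H containing x j' for j' < j but not x j.
  have hsel : ∀ j : Fin k, ∃ g ∈ H, x j ∉ g ∧ ∀ j' : Fin k, (j' : ℕ) < j → x j' ∈ g := by
    intro j
    obtain ⟨S, hSH, hSne, hSeq⟩ := hmem j.castSucc
    have hxj : x j ∉ h j.castSucc := by
      rw [hthr]; simp [Fin.coe_castSucc]
    rw [hSeq, Set.mem_sInter] at hxj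
    push_neg at hxj
    obtain ⟨g, hgS, hxg⟩ := hxj
    refine ⟨g, hSH hgS, hxg, fun j' hj' => ?_⟩
    have : x j' ∈ h j.castSucc := by
      rw [hthr]; simpa [Fin.coe_castSucc] using hj'
    rw [hSeq, Set.mem_sInter] at this
    exact this g hgS
  choose f hfH hfx hflt using hsel
  have hinj : Function.Injective f := by
    intro a b hab
    by_contra hne
    rcases lt_or_gt_of_ne (fun e => hne (by exact_mod_cast Fin.ext e : a = b) :
        (a : ℕ) ≠ (b : ℕ)) with hlt | hlt
    · exact hfx a (hab ▸ hflt b a hlt)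
    · exact hfx b (hab ▸ hflt a b hlt)
  classical
  calc k = (Set.range f).ncard := by
        rw [Set.ncard_eq_toFinset_card', Set.toFinset_range,
          Finset.card_image_of_injective _ hinj, Finset.card_univ, Fintype.card_fin]
    _ ≤ H.ncard := Set.ncard_le_ncard (Set.range_subset_iff.mpr hfH) hfin

theorem stmt_1 {X : Type*} (H : Set (Set X)) (hfin : H.Finite) :
    tdim (iclos H) ≤ (H.ncard : ℕ∞) := by
  apply sSup_le
  rintro n ⟨k, hk, rfl⟩
  exact_mod_cast key H hfin k hk
end

section
/- For any hypothesis class H ⊆ 2^X and any subset f ⊆ X, the threshold dimension of the intersection closure of the f-representation H^f is at least Tdim(H)/2, where H^f := { h Δ f : h ∈ H } (symmetric difference). Consequently the extended threshold dimension ExTdim(H) := min over f ⊆ X of Tdim(closure(H^f)) satisfies ExTdim(H) ≥ Tdim(H)/2. -/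
/-- The `f`-representation `H^f = { h Δ f : h ∈ H }`. -/
def frep {X : Type*} (H : Set (Set X)) (f : Set X) : Set (Set X) :=
  (fun h => symmDiff h f) '' H

/-- The extended threshold dimension `ExTdim(H) = min_{f ⊆ X} Tdim(closure(H^f))`. -/
noncomputable def extdim {X : Type*} (H : Set (Set X)) : ℕ∞ :=
  ⨅ f : Set X, tdim (iclos (frep H f))

lemma subset_iclos {X : Type*} (H : Set (Set X)) : H ⊆ iclos H := by
  intro h hh
  exact ⟨{h}, by simpa using hh, ⟨h, rfl⟩, by simp⟩

lemma hasThresh_mono {X : Type*} {H H' : Set (Set X)} (hs : H ⊆ H') {k : ℕ}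
    (h : HasThresh H k) : HasThresh H' k := by
  obtain ⟨x, g, hg, hx⟩ := h
  exact ⟨x, g, fun i => hs (hg i), hx⟩

lemma le_tdim {X : Type*} {H : Set (Set X)} {k : ℕ} (h : HasThresh H k) :
    (k : ℕ∞) ≤ tdim H := le_sSup ⟨k, h, rfl⟩

/-- Construction for indices outside `f`. -/
lemma keyA {X : Type*} {H : Set (Set X)} (f : Set X) {k m : ℕ}
    (x : Fin k → X) (h : Fin (k + 1) → Set X) (hh : ∀ i, h i ∈ H)
    (hx : ∀ i j, x j ∈ h i ↔ (j : ℕ) + 1 ≤ (i : ℕ))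
    (A : Finset (Fin k)) (hA : A.card = m) (hf : ∀ j ∈ A, x j ∉ f) :
    HasThresh (frep H f) m := by
  set e := A.orderEmbOfFin hA with he
  have hmono : ∀ a b : Fin m, ((e a : Fin k) : ℕ) ≤ ((e b : Fin k) : ℕ) ↔ (a : ℕ) ≤ (b : ℕ) := by
    intro a b
    rw [← Fin.le_def, e.le_iff_le, Fin.le_def]
  refine ⟨fun j => x (e j), fun i =>
    symmDiff (h (Fin.cases 0 (fun i' => ((e i' : Fin k)).succ) i)) f,
    fun i => ⟨_, hh _, rfl⟩, ?_⟩
  intro i j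
  have hjf : x (e j) ∉ f := hf _ (A.orderEmbOfFin_mem hA j)
  rw [Set.mem_symmDiff]
  induction i using Fin.cases with
  | zero =>
    simp only [Fin.cases_zero, hjf, and_true, and_false, false_and, or_false,
      not_false_iff, hx, Fin.val_zero]
    omega
  | succ i' =>
    simp only [Fin.cases_succ, hjf, and_true, and_false, false_and, or_false,
      not_false_iff, hx, Fin.val_succ]
    have h1 := hmono j i'
    omega

/-- Construction for indices inside `f` (reversed order). -/
lemma keyB {X : Type*} {H : Set (Set X)} (f : Set X) {k m : ℕ}
    (x : Fin k → X) (h : Fin (k + 1) → Set X) (hh : ∀ i, h i ∈ H)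
    (hx : ∀ i j, x j ∈ h i ↔ (j : ℕ) + 1 ≤ (i : ℕ))
    (A : Finset (Fin k)) (hA : A.card = m) (hf : ∀ j ∈ A, x j ∈ f) :
    HasThresh (frep H f) m := by
  set e := A.orderEmbOfFin hA with he
  have hmono : ∀ a b : Fin m, ((e a : Fin k) : ℕ) ≤ ((e b : Fin k) : ℕ) ↔ (a : ℕ) ≤ (b : ℕ) := by
    intro a b
    rw [← Fin.le_def, e.le_iff_le, Fin.le_def]
  refine ⟨fun j => x (e j.rev), fun i =>
    symmDiff (h (Fin.cases (Fin.last k) (fun i' => ((e i'.rev : Fin k)).castSucc) i)) f,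
    fun i => ⟨_, hh _, rfl⟩, ?_⟩
  intro i j
  have hjf : x (e j.rev) ∈ f := hf _ (A.orderEmbOfFin_mem hA _)
  rw [Set.mem_symmDiff]
  induction i using Fin.cases with
  | zero =>
    simp only [Fin.cases_zero, hjf, true_and, and_true, not_true, false_and, and_false,
      false_or, or_false, hx, Fin.val_last, Fin.val_zero]
    have := ((e j.rev : Fin k)).isLt
    omega
  | succ i' =>
    simp only [Fin.cases_succ, hjf, true_and, and_true, not_true, false_and, and_false,
      false_or, or_false, hx, Fin.coe_castSucc, Fin.val_succ]
    have h1 := hmono i'.rev j.rev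
    have h2 := hmono j.rev i'.rev
    rw [Fin.val_rev, Fin.val_rev] at h1 h2
    have hj := j.isLt
    have hi := i'.isLt
    omega

lemma key_s2 {X : Type*} {H : Set (Set X)} (f : Set X) {k : ℕ} (hk : HasThresh H k) :
    ∃ m : ℕ, k ≤ 2 * m ∧ HasThresh (frep H f) m := by
  classical
  obtain ⟨x, h, hh, hx⟩ := hk
  set A : Finset (Fin k) := Finset.univ.filter (fun j => x j ∉ f) with hAdef
  set B : Finset (Fin k) := Finset.univ.filter (fun j => x j ∈ f) with hBdef
  have hcard : B.card + A.card = k := by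
    rw [hAdef, hBdef]
    rw [Finset.card_filter_add_card_filter_not]
    simp
  have hA : HasThresh (frep H f) A.card :=
    keyA f x h hh hx A rfl (fun j hj => (Finset.mem_filter.mp hj).2)
  have hB : HasThresh (frep H f) B.card :=
    keyB f x h hh hx B rfl (fun j hj => (Finset.mem_filter.mp hj).2)
  rcases le_total A.card B.card with hle | hle
  · exact ⟨B.card, by omega, hB⟩
  · exact ⟨A.card, by omega, hA⟩

/-- `Tdim(closure(H^f)) ≥ Tdim(H)/2` for every `f`, hence `ExTdim(H) ≥ Tdim(H)/2`. -/
theorem stmt_2 {X : Type*} (H : Set (Set X)) :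
    (∀ f : Set X, tdim H ≤ 2 * tdim (iclos (frep H f))) ∧
      tdim H ≤ 2 * extdim H := by
  have main : ∀ f : Set X, tdim H ≤ 2 * tdim (iclos (frep H f)) := by
    intro f
    apply sSup_le
    rintro n ⟨k, hk, rfl⟩
    obtain ⟨m, hkm, hm⟩ := key_s2 f hk
    calc (k : ℕ∞) ≤ ((2 * m : ℕ) : ℕ∞) := by exact_mod_cast hkm
      _ = 2 * (m : ℕ∞) := by push_cast; ring
      _ ≤ 2 * tdim (iclos (frep H f)) :=
          mul_le_mul_right (le_tdim (hasThresh_mono (subset_iclos _) hm)) 2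
  refine ⟨main, ?_⟩
  obtain ⟨f₀, hf₀⟩ := ciInf_mem (fun f : Set X => tdim (iclos (frep H f)))
  rw [extdim, ← hf₀]
  exact main f₀
end

section
/- For every N ≥ 2, the hypothesis class H* over X = {1,...,2N} consisting of all singletons {i}, all complements of singletons X\{i}, the empty set, and the full set X, has threshold dimension exactly 3. -/
/-- All singletons, complements of singletons, the empty set and the full set over `[2N]`. -/
def Hstar (N : ℕ) : Set (Set (Fin (2 * N))) :=
  {s | (∃ i, s = {i}) ∨ (∃ i, s = {i}ᶜ) ∨ s = (∅ : Set (Fin (2 * N))) ∨ s = Set.univ}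

section Threshold

variable {X : Type*} {H : Set (Set X)}

theorem HasThresh.mono {k m : ℕ} (hk : HasThresh H k) (hm : m ≤ k) : HasThresh H m := by
  obtain ⟨x, h, hmem, hcond⟩ := hk
  exact ⟨fun j => x (Fin.castLE hm j), fun i => h (Fin.castLE (by omega) i),
    fun i => hmem _, fun i j => hcond (Fin.castLE (by omega) i) (Fin.castLE hm j)⟩

theorem tdim_eq_of_hasThresh_of_not_hasThresh_succ {k : ℕ} (hk : HasThresh H k)
    (hk' : ¬ HasThresh H (k + 1)) : tdim H = k := by
  refine le_antisymm (sSup_le ?_) (le_sSup ⟨k, hk, rfl⟩)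
  rintro n ⟨m, hm, rfl⟩
  exact_mod_cast not_lt.1 fun hlt => hk' (hm.mono hlt)

theorem injective_of_mem_iff_succ_le {k : ℕ} {x : Fin k → X} {h : Fin (k + 1) → Set X}
    (hcond : ∀ i j, x j ∈ h i ↔ (j : ℕ) + 1 ≤ (i : ℕ)) : Function.Injective x := by
  intro j j' hjj'
  have hle : (j' : ℕ) + 1 ≤ j + 1 := (hcond j.succ j').1 (hjj' ▸ (hcond j.succ j).2 (by simp))
  have hge : (j : ℕ) + 1 ≤ j' + 1 := (hcond j'.succ j).1 (hjj' ▸ (hcond j'.succ j').2 (by simp))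
  exact Fin.ext (by omega)

theorem not_hasThresh_four_of_subsingleton_or_compl_subsingleton
    (hH : ∀ s ∈ H, s.Subsingleton ∨ sᶜ.Subsingleton) : ¬ HasThresh H 4 := by
  rintro ⟨x, h, hmem, hcond⟩
  have hx := injective_of_mem_iff_succ_le hcond
  have mem_h₂ (j : Fin 4) (hj : (j : ℕ) < 2) : x j ∈ h 2 :=
    (hcond 2 j).2 (by rw [Fin.val_two]; omega)
  have not_mem_h₂ (j : Fin 4) (hj : 2 ≤ (j : ℕ)) : x j ∈ (h 2)ᶜ :=
    fun hm => absurd ((hcond 2 j).1 hm) (by rw [Fin.val_two]; omega)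
  rcases hH _ (hmem 2) with hs | hs
  · exact absurd (hx (hs (mem_h₂ 0 (by decide)) (mem_h₂ 1 (by decide)))) (by decide)
  · exact absurd (hx (hs (not_mem_h₂ 2 (by decide)) (not_mem_h₂ 3 (by decide)))) (by decide)

theorem hasThresh_three {a b c : X} (hab : a ≠ b) (hac : a ≠ c) (hbc : b ≠ c)
    (h₀ : ∅ ∈ H) (h₁ : {a} ∈ H) (h₂ : {c}ᶜ ∈ H) (h₃ : Set.univ ∈ H) : HasThresh H 3 := by
  refine ⟨![a, b, c], ![∅, {a}, {c}ᶜ, Set.univ], fun i => ?_, fun i j => ?_⟩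
  · fin_cases i <;> assumption
  · fin_cases i <;> fin_cases j <;> simp [hab.symm, hac.symm, hbc, hac]

end Threshold

theorem subsingleton_or_compl_subsingleton_of_mem_Hstar {N : ℕ} {s : Set (Fin (2 * N))}
    (hs : s ∈ Hstar N) : s.Subsingleton ∨ sᶜ.Subsingleton := by
  rcases hs with ⟨i, rfl⟩ | ⟨i, rfl⟩ | rfl | rfl
  · exact .inl Set.subsingleton_singleton
  · exact .inr (by simp)
  · exact .inl Set.subsingleton_empty
  · exact .inr (by simp)

theorem stmt_4 (N : ℕ) (hN : 2 ≤ N) : tdim (Hstar N) = 3 := by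
  refine tdim_eq_of_hasThresh_of_not_hasThresh_succ ?_
    (not_hasThresh_four_of_subsingleton_or_compl_subsingleton
      fun _ => subsingleton_or_compl_subsingleton_of_mem_Hstar)
  have h3 : 3 ≤ 2 * N := by omega
  exact hasThresh_three (a := ⟨0, by omega⟩) (b := ⟨1, by omega⟩) (c := ⟨2, by omega⟩)
    (by simp [Fin.ext_iff]) (by simp [Fin.ext_iff]) (by simp [Fin.ext_iff])
    (.inr (.inr (.inl rfl))) (.inl ⟨_, rfl⟩) (.inr (.inl ⟨_, rfl⟩)) (.inr (.inr (.inr rfl)))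
end

section
/- For every N ≥ 2, the hypothesis class H* over X = {1,...,2N} consisting of all singletons, all complements of singletons, the empty set, and the full set, has extended threshold dimension at least N; i.e., for every f ⊆ X, the threshold dimension of the intersection closure of H*^f is at least N. -/
lemma thresh_of {X : Type*} (H : Set (Set X)) (g : Set X) (N : ℕ)
    (x : Fin N → X) (hinj : Function.Injective x) (hxg : ∀ j, x j ∈ g)
    (hg : g ∈ H) (hdel : ∀ j, g \ {x j} ∈ H) :
    HasThresh (iclos H) N := by
  refine ⟨x, fun i => ⋂₀ ({g} ∪ {s | ∃ j : Fin N, (i : ℕ) ≤ (j : ℕ) ∧ s = g \ {x j}}), ?_, ?_⟩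
  · intro i
    refine ⟨_, ?_, ⟨g, Or.inl rfl⟩, rfl⟩
    rintro s (rfl | ⟨j, _, rfl⟩)
    · exact hg
    · exact hdel j
  · intro i j
    simp only [Set.mem_sInter]
    constructor
    · intro h
      by_contra hc
      push_neg at hc
      have := h (g \ {x j}) (Or.inr ⟨j, by omega, rfl⟩)
      exact this.2 rfl
    · rintro hle s (rfl | ⟨k, hk, rfl⟩)
      · exact hxg j
      · refine ⟨hxg j, fun he => ?_⟩
        have : j = k := hinj (Set.mem_singleton_iff.1 he)
        subst this
        omega

theorem stmt_5 (N : ℕ) (hN : 2 ≤ N) :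
    (N : ℕ∞) ≤ extdim (Hstar N) ∧
      ∀ f : Set (Fin (2 * N)), (N : ℕ∞) ≤ tdim (iclos (frep (Hstar N) f)) := by
  classical
  have key : ∀ f : Set (Fin (2 * N)), (N : ℕ∞) ≤ tdim (iclos (frep (Hstar N) f)) := by
    intro f
    have hPf : f ∈ frep (Hstar N) f ∧ ∀ y ∈ f, f \ {y} ∈ frep (Hstar N) f := by
      constructor
      · exact ⟨∅, Or.inr (Or.inr (Or.inl rfl)), by simp [symmDiff_def]⟩
      · intro y hy
        refine ⟨{y}, Or.inl ⟨y, rfl⟩, ?_⟩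
        ext z
        simp only [Set.symmDiff_def, Set.mem_union, Set.mem_diff, Set.mem_singleton_iff]
        constructor
        · rintro (⟨rfl, hzf⟩ | h)
          · exact absurd hy hzf
          · exact h
        · exact fun h => Or.inr h
    have hPc : fᶜ ∈ frep (Hstar N) f ∧ ∀ y ∈ fᶜ, fᶜ \ {y} ∈ frep (Hstar N) f := by
      constructor
      · refine ⟨Set.univ, Or.inr (Or.inr (Or.inr rfl)), ?_⟩
        ext z; simp [Set.symmDiff_def]
      · intro y hy
        refine ⟨{y}ᶜ, Or.inr (Or.inl ⟨y, rfl⟩), ?_⟩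
        ext z
        simp only [Set.symmDiff_def, Set.mem_union, Set.mem_diff, Set.mem_compl_iff,
          Set.mem_singleton_iff]
        constructor
        · rintro (⟨hz, hzf⟩ | ⟨hzf, hz⟩)
          · exact ⟨hzf, hz⟩
          · simp only [not_not] at hz
            subst hz
            exact absurd hzf hy
        · exact fun ⟨h1, h2⟩ => Or.inl ⟨h2, h1⟩
    have hcardsum : f.ncard + fᶜ.ncard = 2 * N := by
      rw [Set.ncard_add_ncard_compl, Nat.card_eq_fintype_card, Fintype.card_fin]
    obtain ⟨g, hgH, hdel, hcard⟩ : ∃ g : Set (Fin (2 * N)),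
        g ∈ frep (Hstar N) f ∧ (∀ y ∈ g, g \ {y} ∈ frep (Hstar N) f) ∧ N ≤ g.ncard := by
      rcases le_or_gt N f.ncard with h | h
      · exact ⟨f, hPf.1, hPf.2, h⟩
      · exact ⟨fᶜ, hPc.1, hPc.2, by omega⟩
    have hcard' : N ≤ g.toFinset.card := by rwa [← Set.ncard_eq_toFinset_card']
    obtain ⟨t, hts, htcard⟩ := Finset.exists_subset_card_eq hcard'
    let e := t.orderIsoOfFin htcard
    have hxg : ∀ j : Fin N, (e j : Fin (2 * N)) ∈ g := fun j =>
      Set.mem_toFinset.1 (hts (e j).2)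
    have hinj : Function.Injective (fun j : Fin N => (e j : Fin (2 * N))) := by
      intro a b hab
      exact e.injective (Subtype.ext hab)
    have thresh := thresh_of (frep (Hstar N) f) g N (fun j => e j) hinj hxg hgH
      (fun j => hdel _ (hxg j))
    exact le_sSup ⟨N, thresh, rfl⟩
  exact ⟨le_iInf key, key⟩
end

section
/- For every N ≥ 2, the class H of complements of singletons over [N] together with the full set (i.e., H = { [N]\{i} : i ∈ [N] } ∪ { [N] }) satisfies: the threshold dimension of the closure of H with respect to the representation f = [N] (the all-ones function) is at most 2, while the threshold dimension of the intersection closure of H itself equals N. -/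
/-- Complements of singletons over `[N]`, together with the full set. -/
def Hrs (N : ℕ) : Set (Set (Fin N)) :=
  {s | (∃ i, s = ({i}ᶜ : Set (Fin N))) ∨ s = Set.univ}

lemma iclos_frep_subsingleton {N : ℕ} {g : Set (Fin N)}
    (hg : g ∈ iclos (frep (Hrs N) Set.univ)) : g.Subsingleton := by
  obtain ⟨S, hS, ⟨s0, hs0⟩, rfl⟩ := hg
  obtain ⟨h, hh, rfl⟩ := hS hs0
  have hsub : Set.Subsingleton (symmDiff h Set.univ) := by
    rcases hh with ⟨i, rfl⟩ | rfl
    · have : symmDiff ({i}ᶜ : Set (Fin N)) Set.univ = {i} := by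
        ext x; simp [Set.symmDiff_def]
      rw [this]; exact Set.subsingleton_singleton
    · have : symmDiff (Set.univ : Set (Fin N)) Set.univ = ∅ := by
        ext x; simp [Set.symmDiff_def]
      rw [this]; exact Set.subsingleton_empty
  exact hsub.anti (Set.sInter_subset_of_mem hs0)

lemma all_mem_iclos_Hrs {N : ℕ} (B : Set (Fin N)) : B ∈ iclos (Hrs N) := by
  by_cases hB : B = Set.univ
  · exact ⟨{Set.univ}, by rintro s rfl; exact Or.inr rfl,
      Set.singleton_nonempty _, by simp [hB]⟩
  · have hne : Bᶜ.Nonempty := by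
      rw [Set.nonempty_compl]; exact hB
    refine ⟨(fun i => ({i}ᶜ : Set (Fin N))) '' Bᶜ, ?_, hne.image _, ?_⟩
    · rintro s ⟨i, _, rfl⟩; exact Or.inl ⟨i, rfl⟩
    · ext x
      simp only [Set.sInter_image, Set.mem_iInter, Set.mem_compl_iff,
        Set.mem_singleton_iff]
      constructor
      · intro hx i hi hxi
        exact hi (hxi ▸ hx)
      · intro hx
        by_contra hxB
        exact hx x hxB rfl

theorem stmt_6 (N : ℕ) (hN : 2 ≤ N) :
    tdim (iclos (frep (Hrs N) Set.univ)) ≤ 2 ∧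
      tdim (iclos (Hrs N)) = N := by
  constructor
  · apply sSup_le
    rintro n ⟨k, ⟨x, h, hmem, hxh⟩, rfl⟩
    have hk : k ≤ 2 := by
      by_contra hk
      push_neg at hk
      have h0 : (0 : ℕ) < k := by omega
      have h1 : (1 : ℕ) < k := by omega
      have h2 : (2 : ℕ) < k + 1 := by omega
      have hx0 : x ⟨0, h0⟩ ∈ h ⟨2, h2⟩ := (hxh ⟨2, h2⟩ ⟨0, h0⟩).mpr (by simp)
      have hx1 : x ⟨1, h1⟩ ∈ h ⟨2, h2⟩ := (hxh ⟨2, h2⟩ ⟨1, h1⟩).mpr (by simp)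
      have heq := iclos_frep_subsingleton (hmem ⟨2, h2⟩) hx0 hx1
      have h1' : (1 : ℕ) < k + 1 := by omega
      have hx0' : x ⟨0, h0⟩ ∈ h ⟨1, h1'⟩ := (hxh ⟨1, h1'⟩ ⟨0, h0⟩).mpr (by simp)
      have hx1' : x ⟨1, h1⟩ ∉ h ⟨1, h1'⟩ := by
        intro hc
        have := (hxh ⟨1, h1'⟩ ⟨1, h1⟩).mp hc
        simp at this
      exact hx1' (heq ▸ hx0')
    exact_mod_cast Nat.cast_le.mpr hk
  · apply le_antisymm
    · apply sSup_le
      rintro n ⟨k, ⟨x, h, hmem, hxh⟩, rfl⟩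
      have hinj : Function.Injective x := by
        intro j j' hjj'
        by_contra hne
        rcases Fin.lt_or_lt_of_ne hne with hlt | hlt
        all_goals {
          first
          | (have hi : (j : ℕ) + 1 < k + 1 := by omega
             have h1 : x j ∈ h ⟨(j : ℕ) + 1, hi⟩ := (hxh _ _).mpr (by simp)
             have h2 := (hxh ⟨(j : ℕ) + 1, hi⟩ j').mp (hjj' ▸ h1)
             simp at h2; omega)
          | (have hi : (j' : ℕ) + 1 < k + 1 := by omega
             have h1 : x j' ∈ h ⟨(j' : ℕ) + 1, hi⟩ := (hxh _ _).mpr (by simp)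
             have h2 := (hxh ⟨(j' : ℕ) + 1, hi⟩ j).mp (hjj' ▸ h1)
             simp at h2; omega)
        }
      have : k ≤ N := by
        have := Fintype.card_le_of_injective x hinj
        simpa using this
      exact_mod_cast Nat.cast_le.mpr this
    · apply le_sSup
      refine ⟨N, ⟨fun j => j, fun i => {m : Fin N | (m : ℕ) < (i : ℕ)}, ?_, ?_⟩, rfl⟩
      · intro i; exact all_mem_iclos_Hrs _
      · intro i j
        simp only [Set.mem_setOf_eq]
        omega
end

section
/- In the replay setting with the conservative threshold strategy over the threshold class on [N], if the learner starts with the all-zero hypothesis and only updates on a false negative (upon receiving label 1 at a point where it predicts 0, setting its new hypothesis to the indicator of [x_t, N]), then the learner never makes a false-positive mistake against the true target, and the total number of true-label mistakes over any sequence of T rounds is at most min(N, T). -/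
/-- Replay setting for the threshold class on `[N] = {1,...,N}`.
Hypotheses are thresholds `1[x ≥ c]`; the conservative learner starts at
`c 0 = N+1` (the all-zero hypothesis `f_0`) and on a false negative
(label `1` at a point below the current threshold) moves its threshold
down to `x t`.  The target is `f* = 1[x ≥ kstar]` with `kstar ∈ [1, N+1]`
(`kstar = N+1` encodes `f_0 ≡ 0`).  The adversary reveals either the true
label or the label of an earlier hypothesis.  Then the learner never makes
a false-positive mistake against the target, and the number of true-label
mistakes over `T` rounds is at most `min N T`. -/
theorem stmt_8 (N T : ℕ) (hN : 1 ≤ N)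
    (kstar : ℕ) (hk1 : 1 ≤ kstar) (hk2 : kstar ≤ N + 1)
    (x : ℕ → ℕ) (hx : ∀ t < T, 1 ≤ x t ∧ x t ≤ N)
    (y : ℕ → Bool)
    (c : ℕ → ℕ) (hc0 : c 0 = N + 1)
    (hcupd : ∀ t, c (t + 1) = if y t = true ∧ x t < c t then x t else c t)
    (hadv : ∀ t < T, y t = decide (kstar ≤ x t) ∨ ∃ i < t, y t = decide (c i ≤ x t)) :
    (∀ t < T, decide (c t ≤ x t) = true → kstar ≤ x t) ∧
      ((Finset.range T).filter
          (fun t => decide (c t ≤ x t) ≠ y t ∧ y t = decide (kstar ≤ x t))).card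
        ≤ min N T := by
  have hmono : ∀ t, c (t + 1) ≤ c t := by
    intro t
    rw [hcupd t]
    split
    · next h => exact le_of_lt h.2
    · exact le_rfl
  have hanti : ∀ i j, i ≤ j → c j ≤ c i := by
    intro i j hij
    induction j with
    | zero => rw [Nat.le_zero.mp hij]
    | succ m ih =>
      rcases Nat.lt_or_ge i (m + 1) with h | h
      · exact le_trans (hmono m) (ih (by omega))
      · have : i = m + 1 := by omega
        subst this; exact le_rfl
  have hinv : ∀ t, t ≤ T → kstar ≤ c t := by
    intro t
    induction t using Nat.strong_induction_on with
    | _ n ih =>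
      intro hn
      cases n with
      | zero => omega
      | succ m =>
        rw [hcupd m]
        split
        · next h =>
          obtain ⟨hy, _⟩ := h
          rcases hadv m (by omega) with h1 | ⟨i, hi, h2⟩
          · rw [hy] at h1
            exact of_decide_eq_true h1.symm
          · rw [hy] at h2
            have h3 : c i ≤ x m := of_decide_eq_true h2.symm
            have h4 : kstar ≤ c i := ih i (by omega) (by omega)
            omega
        · exact ih m (by omega) (by omega)
  constructor
  · intro t ht hd
    have := hinv t (le_of_lt ht)
    have := of_decide_eq_true hd
    omega
  · set M := (Finset.range T).filter
      (fun t => decide (c t ≤ x t) ≠ y t ∧ y t = decide (kstar ≤ x t)) with hM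
    have hmem : ∀ t ∈ M, t < T ∧ y t = true ∧ x t < c t ∧ c (t + 1) = x t := by
      intro t htM
      rw [hM, Finset.mem_filter] at htM
      obtain ⟨htr, hne, hyt⟩ := htM
      rw [Finset.mem_range] at htr
      have hytr : y t = true := by
        by_contra hf
        have hf' : y t = false := by
          cases hy : y t
          · rfl
          · exact absurd hy hf
        rw [hf'] at hne hyt
        have hct : c t ≤ x t := by
          by_contra hc'
          have : decide (c t ≤ x t) = false := decide_eq_false hc'
          exact hne this
        have hks : kstar ≤ x t := by
          have := hinv t (le_of_lt htr); omega
        have : (false : Bool) = true := by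
          rw [hyt]; exact decide_eq_true hks
        simp at this
      have hxlt : x t < c t := by
        by_contra hc'
        push_neg at hc'
        have : decide (c t ≤ x t) = true := decide_eq_true hc'
        rw [hytr] at hne
        exact hne this
      refine ⟨htr, hytr, hxlt, ?_⟩
      rw [hcupd t]
      simp [hytr, hxlt]
    have hcard : M.card ≤ N := by
      have hsub : ∀ t ∈ M, c (t + 1) ∈ Finset.Icc 1 N := by
        intro t htM
        obtain ⟨htr, _, _, heq⟩ := hmem t htM
        have := hx t htr
        rw [heq]
        simp [Finset.mem_Icc]
        omega
      have key : ∀ a ∈ M, ∀ b ∈ M, a < b → c (a + 1) ≠ c (b + 1) := by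
        intro a ha b hb hlt
        obtain ⟨_, _, _, heqa⟩ := hmem a ha
        obtain ⟨_, _, hxb, heqb⟩ := hmem b hb
        have : c b ≤ c (a + 1) := hanti (a + 1) b (by omega)
        omega
      have hinj : Set.InjOn (fun t => c (t + 1)) M := by
        intro a ha b hb hab
        simp only at hab
        rcases lt_trichotomy a b with h | h | h
        · exact absurd hab (key a ha b hb h)
        · exact h
        · exact absurd hab.symm (key b hb a ha h)
      calc M.card ≤ (Finset.Icc 1 N).card :=
            Finset.card_le_card_of_injOn _ hsub hinj
        _ = N := by simp
    have hcardT : M.card ≤ T := by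
      calc M.card ≤ (Finset.range T).card := Finset.card_filter_le _ _
        _ = T := Finset.card_range T
    omega
end

section
/- Let x_1, ..., x_m be i.i.d. samples from the distribution D on [N] with P(X = k) = (1/2)·3^{k-N} for k ∈ [N-1] and P(X=N) the remaining mass, where m = T/2 and log T > 2N (so T ≥ 4^N·3^N, loosely T·3^{-N} ≥ N suffices). Let t_k be the first index t ≤ m with x_t ≤ k (t_k = ∞ if none) and let A_k be the event {t_k < ∞ and x_{t_k} = k}. Then P(A_k) ≥ 1/3 for every k ∈ [N-1], and hence the expected number of indices t with x_t < min{x_1, ..., x_{t-1}} is at least N/3. -/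
/-!
Write `A_k` for the event that the first sample `≤ k` equals `k`. Splitting `A_k` according to
the time `t` of that sample gives `P(A_k) = p ∑_{t<m} q^t` with `p = D{k}`, `q = D(k, ∞)`, so
`P(A_k) · D[0, k] = p (1 - q^m)`. For this law `D[0, k] ≤ 3p/2`, and `q^m ≤ 1/2`: for `k = N`
`q = 0`, otherwise `q ≤ 1 - D{1}` while `m · D{1} ≥ 1`. Hence `P(A_k) ≥ 1/3`. Every `ω ∈ A_k`
has a strict running minimum with value `k`, so summing over `k ∈ [N]` bounds the expected
number of strict running minima by `N/3`.
-/

open MeasureTheory Finset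
open scoped Classical

lemma pow_le_half_of_le_one_sub {q x : ℝ} {m : ℕ} (hq : 0 ≤ q) (hqx : q ≤ 1 - x)
    (hmx : 1 ≤ m * x) : q ^ m ≤ 1 / 2 :=
  calc q ^ m ≤ Real.exp (-x) ^ m := pow_le_pow_left₀ hq (hqx.trans (Real.one_sub_le_exp_neg x)) m
    _ = Real.exp (-(m * x)) := by rw [← Real.exp_nat_mul]; ring_nf
    _ ≤ Real.exp (-1) := Real.exp_le_exp.2 (by linarith)
    _ ≤ 1 / 2 := Real.exp_neg_one_lt_half.le

section FirstHit

variable {α : Type*} [LinearOrder α] {m : ℕ}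

def firstLeEq (k : α) : Set (Fin m → α) := {ω | ∃ t, ω t = k ∧ ∀ s < t, k < ω s}

lemma card_filter_mem_firstLeEq_le (S : Finset α) (ω : Fin m → α) :
    #{k ∈ S | ω ∈ firstLeEq k} ≤ #{t | ∀ s < t, ω t < ω s} := by
  refine (card_le_card fun k hk => ?_).trans (card_image_le (f := ω))
  obtain ⟨-, t, rfl, hmin⟩ := mem_filter.1 hk
  exact mem_image.2 ⟨t, mem_filter.2 ⟨mem_univ t, hmin⟩, rfl⟩

variable [MeasurableSpace α]

lemma measure_pi_firstLeEq_at (P : Measure α) [IsProbabilityMeasure P] (k : α) (t : Fin m) :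
    Measure.pi (fun _ : Fin m => P) {ω | ω t = k ∧ ∀ s < t, k < ω s}
      = P {k} * P (Set.Ioi k) ^ (t : ℕ) := by
  have hpi : {ω : Fin m → α | ω t = k ∧ ∀ s < t, k < ω s}
      = Set.univ.pi fun s => if s < t then Set.Ioi k else if s = t then {k} else Set.univ := by
    ext ω
    simp only [Set.mem_ofPred_eq, Set.mem_pi, Set.mem_univ, true_implies]
    refine ⟨fun ⟨hωt, hlt⟩ s => ?_, fun h => ⟨?_, fun s hs => ?_⟩⟩
    · split_ifs with hs hst
      exacts [hlt s hs, hst ▸ hωt, trivial]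
    · simpa using h t
    · simpa [hs] using h s
  rw [hpi, Measure.pi_pi]
  simp only [apply_ite P, measure_univ]
  rw [prod_ite, filter_gt_eq_Iio, prod_const, Fin.card_Iio, prod_ite_eq',
    if_pos (by simp), mul_comm]

variable [MeasurableSingletonClass α] [Countable α]

lemma measure_pi_firstLeEq (P : Measure α) [IsProbabilityMeasure P] (k : α) :
    Measure.pi (fun _ : Fin m => P) (firstLeEq k)
      = P {k} * ∑ i ∈ range m, P (Set.Ioi k) ^ i := by
  have hunion : firstLeEq k = ⋃ t : Fin m, {ω | ω t = k ∧ ∀ s < t, k < ω s} := by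
    ext ω; simp [firstLeEq]
  have hdisj : Pairwise (Function.onFun Disjoint
      fun t : Fin m => {ω : Fin m → α | ω t = k ∧ ∀ s < t, k < ω s}) := by
    intro t t' hne
    refine Set.disjoint_left.2 fun ω ⟨hωt, hlt⟩ ⟨hωt', hlt'⟩ => ?_
    rcases hne.lt_or_gt with h | h
    · exact (hlt' t h).ne' hωt
    · exact (hlt t' h).ne' hωt'
  rw [hunion, measure_iUnion hdisj fun _ => .of_discrete, tsum_fintype, mul_sum,
    ← Fin.sum_univ_eq_sum_range]
  simp only [measure_pi_firstLeEq_at]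

lemma one_third_le_measureReal_firstLeEq {P : Measure α} [IsProbabilityMeasure P] {k : α}
    (hk : 2 * P.real (Set.Iic k) ≤ 3 * P.real {k}) (hm : P.real (Set.Ioi k) ^ m ≤ 1 / 2) :
    1 / 3 ≤ (Measure.pi fun _ : Fin m => P).real (firstLeEq k) := by
  set p := P.real {k}
  set q := P.real (Set.Ioi k)
  have hformula : (Measure.pi fun _ : Fin m => P).real (firstLeEq k)
      = p * ∑ i ∈ range m, q ^ i := by
    simp [measureReal_def, measure_pi_firstLeEq, ENNReal.toReal_sum, p, q]
  have hIic : P.real (Set.Iic k) = 1 - q := by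
    rw [← Set.compl_Ioi, measureReal_compl .of_discrete, probReal_univ]
  have hS : 0 ≤ ∑ i ∈ range m, q ^ i := sum_nonneg fun i _ => pow_nonneg measureReal_nonneg i
  have hgeom := mul_neg_geom_sum q m
  rw [hformula]
  nlinarith [mul_le_mul_of_nonneg_right hk hS]

lemma sum_measureReal_firstLeEq_le_integral (μ : Measure (Fin m → α)) [IsFiniteMeasure μ]
    (S : Finset α) :
    ∑ k ∈ S, μ.real (firstLeEq k)
      ≤ ∫ ω, (∑ t : Fin m, if ∀ s < t, ω t < ω s then (1 : ℝ) else 0) ∂μ := by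
  have hcount (ω : Fin m → α) :
      ∑ k ∈ S, (firstLeEq k).indicator 1 ω
        ≤ ∑ t : Fin m, if ∀ s < t, ω t < ω s then (1 : ℝ) else 0 := by
    simp only [Set.indicator_apply, Pi.one_apply, sum_boole]
    exact_mod_cast card_filter_mem_firstLeEq_le S ω
  have hint_indicator (k : α) : Integrable ((firstLeEq k).indicator (1 : (Fin m → α) → ℝ)) μ :=
    (integrable_const 1).indicator .of_discrete
  have hint_runningMin (t : Fin m) :
      Integrable (fun ω : Fin m → α => if ∀ s < t, ω t < ω s then (1 : ℝ) else 0) μ :=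
    .of_mem_Icc 0 1 (measurable_of_countable _).aemeasurable
      (ae_of_all _ fun ω => by split_ifs <;> simp)
  calc ∑ k ∈ S, μ.real (firstLeEq k) = ∫ ω, ∑ k ∈ S, (firstLeEq k).indicator 1 ω ∂μ := by
        rw [integral_finsetSum _ fun k _ => hint_indicator k]
        simp only [integral_indicator_one MeasurableSet.of_discrete]
    _ ≤ _ := integral_mono (integrable_finsetSum _ fun k _ => hint_indicator k)
        (integrable_finsetSum _ fun t _ => hint_runningMin t) hcount

end FirstHit

structure IsTruncGeomLaw (N : ℕ) (D : Measure ℕ) : Prop where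
  measure_singleton : ∀ k, 1 ≤ k → k ≤ N - 1 →
    D {k} = ENNReal.ofReal ((1 / 2) * (3 : ℝ) ^ ((k : ℤ) - (N : ℤ)))
  measure_outside : D {n | n = 0 ∨ N < n} = 0

namespace IsTruncGeomLaw

variable {N : ℕ} {D : Measure ℕ}

lemma measureReal_singleton (hD : IsTruncGeomLaw N D) {k : ℕ} (hk₁ : 1 ≤ k) (hkN : k ≤ N - 1) :
    D.real {k} = 3 ^ k / (2 * 3 ^ N) := by
  rw [measureReal_def, hD.measure_singleton k hk₁ hkN, ENNReal.toReal_ofReal (by positivity),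
    zpow_sub₀ three_ne_zero, zpow_natCast, zpow_natCast]
  ring

variable [IsProbabilityMeasure D]

lemma measureReal_eq_zero_of_subset (hD : IsTruncGeomLaw N D) {s : Set ℕ}
    (hs : s ⊆ {n | n = 0 ∨ N < n}) : D.real s = 0 :=
  (measureReal_eq_zero_iff).2 (measure_mono_null hs hD.measure_outside)

lemma measureReal_Ioi (hD : IsTruncGeomLaw N D) : D.real (Set.Ioi N) = 0 :=
  hD.measureReal_eq_zero_of_subset fun _ hn => Or.inr hn

lemma measureReal_Iic (hD : IsTruncGeomLaw N D) {k : ℕ} (hkN : k ≤ N - 1) :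
    D.real (Set.Iic k) = (3 ^ (k + 1) - 3) / (4 * 3 ^ N) := by
  induction k with
  | zero =>
    rw [hD.measureReal_eq_zero_of_subset (s := Set.Iic 0) fun n hn => Or.inl (Nat.le_zero.1 hn)]
    norm_num
  | succ k ih =>
    have hIic : Set.Iic (k + 1) = Set.Iic k ∪ {k + 1} := by ext; simp; omega
    rw [hIic, measureReal_union (by simp) .of_discrete, ih (by omega),
      hD.measureReal_singleton (by omega) hkN]
    field_simp
    ring

lemma measureReal_Iic_self (hD : IsTruncGeomLaw N D) : D.real (Set.Iic N) = 1 := by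
  rw [← Set.compl_Ioi, measureReal_compl .of_discrete, hD.measureReal_Ioi, probReal_univ, sub_zero]

lemma two_mul_measureReal_Iic_le (hD : IsTruncGeomLaw N D) {k : ℕ} (hk₁ : 1 ≤ k) (hkN : k ≤ N) :
    2 * D.real (Set.Iic k) ≤ 3 * D.real {k} := by
  rcases hkN.lt_or_eq with hk | rfl
  · rw [hD.measureReal_Iic (by omega), hD.measureReal_singleton hk₁ (by omega)]
    field_simp
    linarith [pow_succ (3 : ℝ) k]
  · have hIic : Set.Iic k = Set.Iic (k - 1) ∪ {k} := by ext; simp; omega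
    have hsplit := hD.measureReal_Iic_self
    rw [hIic, measureReal_union (by simp; omega) .of_discrete, hD.measureReal_Iic le_rfl,
      Nat.sub_add_cancel hk₁] at hsplit
    rw [hD.measureReal_Iic_self]
    have h3 : (0 : ℝ) < 3 ^ k := by positivity
    field_simp at hsplit
    nlinarith

lemma measureReal_Ioi_pow_le_half (hD : IsTruncGeomLaw N D) {k m : ℕ} (hk₁ : 1 ≤ k) (hkN : k < N)
    (hm : 3 ^ N ≤ m) : D.real (Set.Ioi k) ^ m ≤ 1 / 2 := by
  have hIoi : D.real (Set.Ioi k) ≤ 1 - 3 / (2 * 3 ^ N) := by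
    calc D.real (Set.Ioi k) ≤ D.real (Set.Ioi 1) := measureReal_mono (Set.Ioi_subset_Ioi hk₁)
      _ = 1 - 3 / (2 * 3 ^ N) := by
        rw [← Set.compl_Iic, measureReal_compl .of_discrete, probReal_univ,
          hD.measureReal_Iic (by omega)]
        ring
  refine pow_le_half_of_le_one_sub measureReal_nonneg hIoi ?_
  have h3N : (0 : ℝ) < 3 ^ N := by positivity
  have hm' : (3 : ℝ) ^ N ≤ m := by exact_mod_cast hm
  rw [mul_div_assoc', le_div_iff₀ (by positivity)]
  linarith

end IsTruncGeomLaw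

open scoped Classical ENNReal in
/-- Let `x_0,...,x_{m-1}` be i.i.d. samples (modelled by the product measure
`Measure.pi` with identical coordinate distribution `D`) from the distribution
on `[N]` with `D{k} = (1/2)·3^{k-N}` for `k ∈ [N-1]` and the remaining mass at
`N`, where `m = T/2` and `T ≥ N·3^N`.  Let `A_k` be the event that the first
sample lying in `{1,...,k}` equals exactly `k`.  Then `P(A_k) ≥ 1/3` for every
`k ∈ [N-1]`, and the expected number of strict running minima is at least `N/3`. -/
theorem stmt_11 (N T m : ℕ) (hN : 1 ≤ N)
    (hT : (N : ℝ) * 3 ^ N ≤ (T : ℝ)) (hm : m = T / 2)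
    (D : Measure ℕ) [IsProbabilityMeasure D]
    (hD1 : ∀ k, 1 ≤ k → k ≤ N - 1 →
      D {k} = ENNReal.ofReal ((1 / 2) * (3 : ℝ) ^ ((k : ℤ) - (N : ℤ))))
    (hD2 : D {n | n = 0 ∨ N < n} = 0) :
    (∀ k, 1 ≤ k → k ≤ N - 1 →
      (1 / 3 : ℝ≥0∞) ≤
        Measure.pi (fun _ : Fin m => D)
          {ω : Fin m → ℕ | ∃ t : Fin m, ω t = k ∧ ∀ s < t, k < ω s}) ∧
      (N : ℝ) / 3 ≤
        ∫ ω, (∑ t : Fin m, if ∀ s < t, ω t < ω s then (1 : ℝ) else 0)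
          ∂(Measure.pi fun _ : Fin m => D) := by
  have hD : IsTruncGeomLaw N D := ⟨hD1, hD2⟩
  have hT' : N * 3 ^ N ≤ T := by exact_mod_cast hT
  have hm_pos : 0 < m := by
    have := Nat.mul_le_mul hN (Nat.le_self_pow (by omega : N ≠ 0) 3)
    omega
  have hm_large (hN₂ : 2 ≤ N) : 3 ^ N ≤ m := by
    have := Nat.mul_le_mul_right (3 ^ N) hN₂
    omega
  have key (k : ℕ) (hk₁ : 1 ≤ k) (hkN : k ≤ N) :
      (1 / 3 : ℝ) ≤ (Measure.pi fun _ : Fin m => D).real (firstLeEq k) := by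
    refine one_third_le_measureReal_firstLeEq (hD.two_mul_measureReal_Iic_le hk₁ hkN) ?_
    rcases hkN.lt_or_eq with hk | rfl
    · exact hD.measureReal_Ioi_pow_le_half hk₁ hk (hm_large (by omega))
    · rw [hD.measureReal_Ioi, zero_pow hm_pos.ne']
      norm_num
  refine ⟨fun k hk₁ hkN => ?_, ?_⟩
  · change (1 / 3 : ℝ≥0∞) ≤ Measure.pi (fun _ : Fin m => D) (firstLeEq k)
    simpa [ENNReal.ofReal_div_of_pos] using
      (ENNReal.ofReal_le_iff_le_toReal (measure_ne_top _ _)).2 (key k hk₁ (by omega))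
  · calc (N : ℝ) / 3 = ∑ _k ∈ Icc 1 N, (1 / 3 : ℝ) := by simp; ring
      _ ≤ ∑ k ∈ Icc 1 N, (Measure.pi fun _ : Fin m => D).real (firstLeEq k) :=
        sum_le_sum fun k hk => key k (mem_Icc.1 hk).1 (mem_Icc.1 hk).2
      _ ≤ _ := sum_measureReal_firstLeEq_le_integral _ _
end

section
/- Let (X, ⪯) be a partial order and let G be a family of initial segments of (X, ⪯). Then the threshold dimension of the intersection closure of G equals the threshold dimension of G: Tdim(Ḡ) = Tdim(G). -/
def IsInitSeg {X : Type*} [PartialOrder X] (h : Set X) : Prop :=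
  (∀ x y : X, x ≤ y → y ∈ h → x ∈ h) ∧ ∀ y ∈ h, ∀ z ∈ h, y ≤ z ∨ z ≤ y

/-- For a family of initial segments, the threshold dimension of the
intersection closure coincides with that of the family itself. -/
theorem stmt_14 {X : Type*} [PartialOrder X] (G : Set (Set X))
    (hG : ∀ g ∈ G, IsInitSeg g) :
    tdim (iclos G) = tdim G := by
  have hsub : ∀ k, HasThresh G k → HasThresh (iclos G) k := by
    rintro k ⟨x, h, hmem, hth⟩
    exact ⟨x, h, fun i => ⟨{h i}, by simpa using hmem i, ⟨h i, rfl⟩, by simp⟩, hth⟩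
  have hrev : ∀ k, HasThresh (iclos G) k → HasThresh G k := by
    rintro k ⟨x, h, hmem, hth⟩
    have hseg : ∀ g ∈ iclos G, IsInitSeg g := by
      rintro g ⟨S, hSG, ⟨s0, hs0⟩, rfl⟩
      constructor
      · intro a b hab hb
        exact Set.mem_sInter.2 fun t ht =>
          (hG t (hSG ht)).1 a b hab (Set.mem_sInter.1 hb t ht)
      · intro a ha b hb
        exact (hG s0 (hSG hs0)).2 a (Set.mem_sInter.1 ha s0 hs0)
          b (Set.mem_sInter.1 hb s0 hs0)
    have hchain : ∀ i j : Fin k, (i : ℕ) ≤ (j : ℕ) → x i ≤ x j := by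
      intro i j hij
      rcases eq_or_lt_of_le hij with heq | hlt
      · have : i = j := Fin.ext heq
        subst this; exact le_refl _
      · have hj1 : ((j : ℕ) + 1) < k + 1 := by omega
        set m : Fin (k + 1) := ⟨(j : ℕ) + 1, hj1⟩
        have hxi : x i ∈ h m := (hth m i).2 (by simp only [m]; omega)
        have hxj : x j ∈ h m := (hth m j).2 (by simp only [m]; omega)
        rcases (hseg _ (hmem m)).2 _ hxi _ hxj with h1 | h1
        · exact h1
        · exfalso
          have hi1 : ((i : ℕ) + 1) < k + 1 := by omega
          set m' : Fin (k + 1) := ⟨(i : ℕ) + 1, hi1⟩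
          have hxi' : x i ∈ h m' := (hth m' i).2 (by simp only [m']; omega)
          have hxj' : x j ∈ h m' := (hseg _ (hmem m')).1 _ _ h1 hxi'
          have := (hth m' j).1 hxj'
          simp only [m'] at this; omega
    have key : ∀ i : Fin (k + 1), ∃ g ∈ G, ∀ j : Fin k,
        x j ∈ g ↔ (j : ℕ) + 1 ≤ (i : ℕ) := by
      intro i
      obtain ⟨S, hSG, ⟨s0, hs0⟩, hSeq⟩ := hmem i
      by_cases hik : (i : ℕ) < k
      · set xi : Fin k := ⟨(i : ℕ), hik⟩ with hxidef
        have hx : x xi ∉ h i := by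
          intro hmemx
          have := (hth i xi).1 hmemx
          simp only [xi] at this; omega
        have hex : ∃ g ∈ S, x xi ∉ g := by
          by_contra hcon
          push_neg at hcon
          exact hx (hSeq ▸ Set.mem_sInter.2 hcon)
        obtain ⟨g, hgS, hgx⟩ := hex
        refine ⟨g, hSG hgS, fun j => ⟨?_, ?_⟩⟩
        · intro hj
          by_contra hcon
          push_neg at hcon
          have hle : (xi : ℕ) ≤ (j : ℕ) := by simp only [xi]; omega
          exact hgx ((hG g (hSG hgS)).1 _ _ (hchain xi j hle) hj)
        · intro hj
          have hmemh : x j ∈ h i := (hth i j).2 hj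
          rw [hSeq] at hmemh
          exact Set.mem_sInter.1 hmemh g hgS
      · refine ⟨s0, hSG hs0, fun j => ⟨fun _ => by omega, fun _ => ?_⟩⟩
        have hmemh : x j ∈ h i := (hth i j).2 (by omega)
        rw [hSeq] at hmemh
        exact Set.mem_sInter.1 hmemh s0 hs0
    choose g hgG hgth using key
    exact ⟨x, g, hgG, fun i j => hgth i j⟩
  have hiff : ∀ k, HasThresh (iclos G) k ↔ HasThresh G k := fun k => ⟨hrev k, hsub k⟩
  unfold tdim
  congr 1
  ext n
  simp only [Set.mem_setOf_eq]
  exact exists_congr fun k => and_congr_left' (hiff k)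
end
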